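/- Fix n ≥ 2 and complex numbers q_{ij} (1 ≤ i, j ≤ n) with q_{ii} = 1, q_{ji} = q_{ij}^{-1} and |q_{ij}| = 1, and let S = (S_1, …, S_n) be the tuple on the q-commuting Fock space Γ_q(ℂⁿ), S_i = P_{Γ_q(ℂⁿ)} V_i |_{Γ_q(ℂⁿ)}, with vacuum vector ω. Then for every i and every p ≥ 0: ⟨ω, (S_i + S_i^*)^p ω⟩ = 0 if p is odd, and ⟨ω, (S_i + S_i^*)^p ω⟩ = C_{p/2} = (1/(p/2 + 1)) · binom(p, p/2) (the Catalan number) if p is even. In particular S_i + S_i^* has semicircular distribution with respect to the vacuum state. -/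

import Mathlib

/-!
The vectors `e_k = e_{i^k}` (the word `i ⋯ i` of length `k`) lie in `Γ_q(ℂⁿ)`, because every
factor of `q^σ(i ⋯ i)` is `q_{ii} = 1`. They are orthonormal, `S_i e_k = e_{k+1}`, and since
`V_i` maps basis vectors injectively to basis vectors, `S_i^* e_{k+1} = e_k` and `S_i^* ω = 0`.
So `S_i + S_i^*` acts on `(e_k)` by the tridiagonal Jacobi matrix of the free Gaussian, and
`⟪e_k, (S_i + S_i^*)^p ω⟫` counts lattice paths of length `p` from height `0` to height `k`
that stay nonnegative. By the reflection principle the count of such paths returning to `0`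
vanishes for odd `p` and is the Catalan number `C_l` for `p = 2l`.
-/

open scoped InnerProductSpace

/-- `q^σ(x) = ∏ q_{x_{σ⁻¹(k)} x_{σ⁻¹(i)}}`, the product over all pairs `i < k`
with `σ⁻¹(i) > σ⁻¹(k)`. -/
noncomputable def qSigma {n : ℕ} (q : Fin n → Fin n → ℂ) {m : ℕ} (x : Fin m → Fin n)
    (σ : Equiv.Perm (Fin m)) : ℂ :=
  ∏ p ∈ Finset.univ.filter (fun p : Fin m × Fin m => p.1 < p.2 ∧ σ⁻¹ p.2 < σ⁻¹ p.1),
    q (x (σ⁻¹ p.2)) (x (σ⁻¹ p.1))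

/-- The full Fock space over `ℂⁿ`, realized as `ℓ²(Λ̃)`. -/
noncomputable abbrev FockSpace (n : ℕ) := lp (fun _ : List (Fin n) => ℂ) 2

def dyckPrefixCount : ℕ → ℕ → ℕ
  | 0, 0 => 1
  | 0, _ + 1 => 0
  | p + 1, 0 => dyckPrefixCount p 1
  | p + 1, k + 1 => dyckPrefixCount p k + dyckPrefixCount p (k + 2)

namespace dyckPrefixCount

theorem eq_zero_of_lt {p k : ℕ} (h : p < k) : dyckPrefixCount p k = 0 := by
  induction p generalizing k with
  | zero => obtain ⟨k, rfl⟩ := Nat.exists_eq_add_one.mpr h; rfl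
  | succ p ih =>
    obtain ⟨k, rfl⟩ := Nat.exists_eq_add_one.mpr (Nat.zero_lt_of_lt h)
    rw [dyckPrefixCount, ih (by omega), ih (by omega)]

theorem eq_zero_of_odd {p k : ℕ} (h : Odd (p + k)) : dyckPrefixCount p k = 0 := by
  induction p generalizing k with
  | zero => exact eq_zero_of_lt (Nat.pos_of_ne_zero (by rintro rfl; simp at h))
  | succ p ih =>
    cases k with
    | zero => exact ih (by simpa [add_comm] using h)
    | succ k =>
      rw [dyckPrefixCount, ih (by grind), ih (by grind)]

-- Reflection principle: the paths to `k` of length `k + 2j` that touch `-1` are in bijection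
-- with the unrestricted paths to `-k - 2`, which take `j + k + 1` down-steps.
theorem add_choose {p k j : ℕ} (h : p = k + 2 * j) :
    dyckPrefixCount p k + p.choose (j + k + 1) = p.choose j := by
  induction p generalizing k j with
  | zero =>
    obtain ⟨rfl, rfl⟩ : k = 0 ∧ j = 0 := by omega
    rfl
  | succ p ih =>
    rcases k with _ | k <;> rcases j with _ | j
    · omega
    · have h1 := ih (k := 1) (j := j) (by omega)
      rw [dyckPrefixCount, Nat.choose_succ_succ' p (j + 1), Nat.choose_succ_succ' p j]
      rw [show j + 1 + 1 = j + 2 by omega] at h1 ⊢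
      omega
    · obtain rfl : k = p := by omega
      have h1 := ih (k := k) (j := 0) rfl
      rw [dyckPrefixCount, eq_zero_of_lt (by omega : k < k + 2),
        Nat.choose_eq_zero_of_lt (by omega : k + 1 < 0 + (k + 1) + 1)]
      rw [Nat.choose_eq_zero_of_lt (by omega : k < 0 + k + 1)] at h1
      simpa using h1
    · have h1 := ih (k := k) (j := j + 1) (by omega)
      have h2 := ih (k := k + 2) (j := j) (by omega)
      rw [dyckPrefixCount, show j + 1 + (k + 1) + 1 = (j + k + 2) + 1 by omega,
        Nat.choose_succ_succ' p (j + k + 2), Nat.choose_succ_succ' p j]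
      rw [show j + 1 + k + 1 = j + k + 2 by omega] at h1
      rw [show j + (k + 2) + 1 = j + k + 2 + 1 by omega] at h2
      omega

theorem two_mul_zero_eq_catalan (l : ℕ) : dyckPrefixCount (2 * l) 0 = catalan l := by
  have hrefl := add_choose (k := 0) (j := l) (p := 2 * l) (by ring)
  have hsucc := Nat.choose_succ_right_eq (2 * l) l
  rw [show 2 * l - l = l by omega] at hsucc
  apply Nat.eq_of_mul_eq_mul_left l.succ_pos
  rw [succ_mul_catalan_eq_centralBinom, Nat.centralBinom_eq_two_mul_choose]
  nlinarith

end dyckPrefixCount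

section Shift

variable {𝕜 E : Type*} [RCLike 𝕜] [NormedAddCommGroup E] [InnerProductSpace 𝕜 E] [CompleteSpace E]

theorem inner_add_adjoint_pow_apply_eq_dyckPrefixCount {S : E →L[𝕜] E} {e : ℕ → E}
    (he : Orthonormal 𝕜 e) (hS : ∀ k, S (e k) = e (k + 1))
    (hS'succ : ∀ k, S.adjoint (e (k + 1)) = e k) (hS'zero : S.adjoint (e 0) = 0) (p k : ℕ) :
    ⟪e k, ((S + S.adjoint) ^ p) (e 0)⟫_𝕜 = dyckPrefixCount p k := by
  set T := S + S.adjoint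
  have hT : T.adjoint = T := by simp [T, add_comm]
  induction p generalizing k with
  | zero =>
    rw [pow_zero, one_apply_eq_self, orthonormal_iff_ite.mp he]
    cases k <;> simp [dyckPrefixCount]
  | succ p ih =>
    rw [pow_succ', mul_apply_eq_comp, ← ContinuousLinearMap.adjoint_inner_left, hT]
    cases k with
    | zero =>
      rw [add_apply, hS, hS'zero, add_zero, ih, dyckPrefixCount]
    | succ k =>
      rw [add_apply, hS, hS'succ, inner_add_left, ih, ih, dyckPrefixCount,
        Nat.cast_add, add_comm]

end Shift

theorem ContinuousLinearMap.adjoint_compression_apply_eq {𝕜 E : Type*} [RCLike 𝕜]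
    [NormedAddCommGroup E] [InnerProductSpace 𝕜 E] {K : Submodule 𝕜 E} [CompleteSpace K]
    {Q : E →L[𝕜] E} (hQmem : ∀ x, Q x ∈ K) (hQorth : ∀ x, ∀ y ∈ K, ⟪x - Q x, y⟫_𝕜 = 0)
    (V : E →L[𝕜] E) {x z : K}
    (h : ∀ y : K, ⟪(x : E), V y⟫_𝕜 = ⟪(z : E), y⟫_𝕜) :
    ((Q.codRestrict K hQmem).comp (V.comp K.subtypeL)).adjoint x = z := by
  refine ext_inner_right 𝕜 fun y => ?_
  have hQ : ⟪(x : E), Q (V y)⟫_𝕜 = ⟪(x : E), V y⟫_𝕜 := by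
    have hx := hQorth (V y) x x.2
    rw [inner_sub_left, sub_eq_zero] at hx
    rw [← inner_conj_symm, ← hx, inner_conj_symm]
  rw [ContinuousLinearMap.adjoint_inner_left, Submodule.coe_inner, Submodule.coe_inner]
  exact hQ.trans (h y)

section SingleMap

variable {𝕜 ι : Type*} [RCLike 𝕜] [DecidableEq ι]

theorem lp.orthonormal_single : Orthonormal 𝕜 (fun i : ι => lp.single 2 i (1 : 𝕜)) := by
  rw [orthonormal_iff_ite]
  intro i j
  simp [lp.inner_single_left, lp.single_apply, Pi.single_apply]

variable {V : lp (fun _ : ι => 𝕜) 2 →L[𝕜] lp (fun _ : ι => 𝕜) 2} {g : ι → ι}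

theorem lp.hasSum_inner_single_of_map_single (hV : ∀ i, V (lp.single 2 i 1) = lp.single 2 (g i) 1)
    (x : lp (fun _ : ι => 𝕜) 2) (j : ι) :
    HasSum (fun i => if g i = j then x i else 0) ⟪lp.single 2 j 1, V x⟫_𝕜 := by
  have := ((innerSL 𝕜 (lp.single 2 j (1 : 𝕜))).comp V).hasSum
    (lp.hasSum_single ENNReal.ofNat_ne_top x)
  convert this using 1
  · ext i
    rw [ContinuousLinearMap.comp_apply, ← mul_one (x i), ← smul_eq_mul, lp.single_smul, map_smul,
      hV]
    simp [lp.inner_single_left, lp.single_apply, Pi.single_apply, eq_comm]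
  · rfl

theorem lp.inner_single_apply_of_map_single (hV : ∀ i, V (lp.single 2 i 1) = lp.single 2 (g i) 1)
    (hg : g.Injective) (x : lp (fun _ : ι => 𝕜) 2) (i : ι) :
    ⟪lp.single 2 (g i) 1, V x⟫_𝕜 = ⟪lp.single 2 i 1, x⟫_𝕜 := by
  have hsum : HasSum (fun b => if g b = g i then x b else 0) (x i) := by
    convert hasSum_ite_eq i (x i) using 2 with b
    by_cases hb : b = i <;> simp [hg.eq_iff, hb]
  rw [(lp.hasSum_inner_single_of_map_single hV x (g i)).unique hsum, lp.inner_single_left]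
  simp

theorem lp.inner_single_apply_of_map_single_of_notMem_range
    (hV : ∀ i, V (lp.single 2 i 1) = lp.single 2 (g i) 1) (x : lp (fun _ : ι => 𝕜) 2) {j : ι}
    (hj : j ∉ Set.range g) : ⟪lp.single 2 j 1, V x⟫_𝕜 = 0 :=
  (lp.hasSum_inner_single_of_map_single hV x j).unique
    (by simp [show ∀ i, g i ≠ j from fun i h => hj ⟨i, h⟩])

end SingleMap

theorem List.ofFn_eq_replicate_iff {α : Type*} {m k : ℕ} {f : Fin m → α} {a : α} :
    List.ofFn f = List.replicate k a ↔ m = k ∧ ∀ j, f j = a := by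
  simp [List.eq_replicate_iff]

theorem single_replicate_mem_qCommuting {n : ℕ} {q : Fin n → Fin n → ℂ} {i : Fin n} (hq : q i i = 1)
    (k : ℕ) : (lp.single 2 (List.replicate k i) 1 : FockSpace n) ∈
      {x : FockSpace n | ∀ (m : ℕ) (α : Fin m → Fin n) (σ : Equiv.Perm (Fin m)),
          x (List.ofFn fun i => α (σ⁻¹ i)) = qSigma q α σ * x (List.ofFn α)} := by
  intro m α σ
  by_cases hα : ∀ j, α j = i
  · obtain rfl : α = fun _ => i := funext hα
    rw [qSigma, Finset.prod_eq_one fun _ _ => hq, one_mul]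
  · have h : List.ofFn α ≠ List.replicate k i := fun h => hα (List.ofFn_eq_replicate_iff.mp h).2
    have hσ : (List.ofFn fun j => α (σ⁻¹ j)) ≠ List.replicate k i := fun h =>
      hα fun j => by simpa using (List.ofFn_eq_replicate_iff.mp h).2 (σ j)
    rw [lp.single_apply_ne _ _ _ h, lp.single_apply_ne _ _ _ hσ, mul_zero]

theorem cast_catalan_eq_inv_mul_choose {K : Type*} [DivisionRing K] [CharZero K] (l : ℕ) :
    (catalan l : K) = ((l : K) + 1)⁻¹ * (2 * l).choose l := by
  rw [eq_inv_mul_iff_mul_eq₀ (Nat.cast_add_one_ne_zero l), ← Nat.centralBinom_eq_two_mul_choose,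
    ← succ_mul_catalan_eq_centralBinom]
  push_cast
  rfl

theorem stmt17_general {n : ℕ} (q : Fin n → Fin n → ℂ)
    (hq1 : ∀ i, q i i = 1)
    (V : Fin n → FockSpace n →L[ℂ] FockSpace n)
    (hV : ∀ (i : Fin n) (α : List (Fin n)),
      V i (lp.single 2 α (1 : ℂ)) = lp.single 2 (i :: α) (1 : ℂ))
    (Γq : Submodule ℂ (FockSpace n)) [CompleteSpace ↥Γq]
    (hΓ : (Γq : Set (FockSpace n))
      = {x : FockSpace n | ∀ (m : ℕ) (α : Fin m → Fin n) (σ : Equiv.Perm (Fin m)),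
          x (List.ofFn fun i => α (σ⁻¹ i)) = qSigma q α σ * x (List.ofFn α)})
    (Q : FockSpace n →L[ℂ] FockSpace n)
    (hQmem : ∀ x, Q x ∈ Γq) (hQfix : ∀ x ∈ Γq, Q x = x)
    (hQorth : ∀ x : FockSpace n, ∀ y ∈ Γq, (inner ℂ (x - Q x) y : ℂ) = 0)
    (hω : lp.single 2 ([] : List (Fin n)) (1 : ℂ) ∈ Γq) :
    letI S : Fin n → ↥Γq →L[ℂ] ↥Γq := fun i =>
      (Q.codRestrict Γq hQmem).comp ((V i).comp Γq.subtypeL)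
    letI ω : ↥Γq := ⟨lp.single 2 ([] : List (Fin n)) (1 : ℂ), hω⟩
    ∀ (i : Fin n) (p : ℕ),
      (Odd p →
        (inner ℂ ω (((S i + ContinuousLinearMap.adjoint (S i)) ^ p) ω) : ℂ) = 0) ∧
      (∀ l : ℕ, p = 2 * l →
        (inner ℂ ω (((S i + ContinuousLinearMap.adjoint (S i)) ^ p) ω) : ℂ)
          = (((l : ℂ) + 1))⁻¹ * (p.choose l : ℂ)) := by
  intro i p
  beta_reduce
  set S := (Q.codRestrict Γq hQmem).comp ((V i).comp Γq.subtypeL)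
  set ω : Γq := ⟨lp.single 2 [] 1, hω⟩
  have hmem (k : ℕ) : (lp.single 2 (List.replicate k i) 1 : FockSpace n) ∈ Γq := by
    rw [← SetLike.mem_coe, hΓ]
    exact single_replicate_mem_qCommuting (hq1 i) k
  let e (k : ℕ) : Γq := ⟨_, hmem k⟩
  have he : Orthonormal ℂ e :=
    (lp.orthonormal_single.comp _ (List.replicate_left_injective i)).codRestrict Γq hmem
  have hS (k : ℕ) : S (e k) = e (k + 1) :=
    Subtype.ext <| (congrArg Q (hV i _)).trans (hQfix _ (hmem (k + 1)))
  have hS'succ (k : ℕ) : S.adjoint (e (k + 1)) = e k :=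
    ContinuousLinearMap.adjoint_compression_apply_eq hQmem hQorth (V i) fun y =>
      lp.inner_single_apply_of_map_single (hV i) List.cons_injective y _
  have hS'zero : S.adjoint (e 0) = 0 :=
    ContinuousLinearMap.adjoint_compression_apply_eq hQmem hQorth (V i) fun y => by
      rw [lp.inner_single_apply_of_map_single_of_notMem_range (hV i) y (by simp),
        ZeroMemClass.coe_zero, inner_zero_left]
  have hmoment : ⟪ω, ((S + S.adjoint) ^ p) ω⟫_ℂ = dyckPrefixCount p 0 :=
    inner_add_adjoint_pow_apply_eq_dyckPrefixCount he hS hS'succ hS'zero p 0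
  refine ⟨fun hp => ?_, fun l hl => ?_⟩
  · rw [hmoment, dyckPrefixCount.eq_zero_of_odd (by simpa using hp), Nat.cast_zero]
  · rw [hmoment, hl, dyckPrefixCount.two_mul_zero_eq_catalan, cast_catalan_eq_inv_mul_choose]

/-- Moments of `S_i + S_i^*` with respect to the vacuum state on the `q`-commuting Fock
space: odd moments vanish and the `2l`-th moment is the Catalan number
`C_l = (1/(l+1))·binom(2l, l)`; i.e. `S_i + S_i^*` has semicircular distribution. -/
theorem stmt17 {n : ℕ} (hn : 2 ≤ n) (q : Fin n → Fin n → ℂ)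
    (hq1 : ∀ i, q i i = 1) (hq2 : ∀ i j, q j i = (q i j)⁻¹) (hq3 : ∀ i j, ‖q i j‖ = 1)
    (V : Fin n → FockSpace n →L[ℂ] FockSpace n)
    (hV : ∀ (i : Fin n) (α : List (Fin n)),
      V i (lp.single 2 α (1 : ℂ)) = lp.single 2 (i :: α) (1 : ℂ))
    (Γq : Submodule ℂ (FockSpace n)) [CompleteSpace ↥Γq]
    (hΓ : (Γq : Set (FockSpace n))
      = {x : FockSpace n | ∀ (m : ℕ) (α : Fin m → Fin n) (σ : Equiv.Perm (Fin m)),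
          x (List.ofFn fun i => α (σ⁻¹ i)) = qSigma q α σ * x (List.ofFn α)})
    (Q : FockSpace n →L[ℂ] FockSpace n)
    (hQmem : ∀ x, Q x ∈ Γq) (hQfix : ∀ x ∈ Γq, Q x = x)
    (hQorth : ∀ x : FockSpace n, ∀ y ∈ Γq, (inner ℂ (x - Q x) y : ℂ) = 0)
    (hω : lp.single 2 ([] : List (Fin n)) (1 : ℂ) ∈ Γq) :
    letI S : Fin n → ↥Γq →L[ℂ] ↥Γq := fun i =>
      (Q.codRestrict Γq hQmem).comp ((V i).comp Γq.subtypeL)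
    letI ω : ↥Γq := ⟨lp.single 2 ([] : List (Fin n)) (1 : ℂ), hω⟩
    ∀ (i : Fin n) (p : ℕ),
      (Odd p →
        (inner ℂ ω (((S i + ContinuousLinearMap.adjoint (S i)) ^ p) ω) : ℂ) = 0) ∧
      (∀ l : ℕ, p = 2 * l →
        (inner ℂ ω (((S i + ContinuousLinearMap.adjoint (S i)) ^ p) ω) : ℂ)
          = (((l : ℂ) + 1))⁻¹ * (p.choose l : ℂ)) :=
  stmt17_general q hq1 V hV Γq hΓ Q hQmem hQfix hQorth hω
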